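/- arXiv:1503.07152 — 5 statements merged into one kernel-verified Lean document; each statement's English description precedes it below -/
import Mathlib

section
/- Let A be an m×n real matrix of rank r, let ℓ ≥ r, and let Ω be a random n×ℓ real matrix with independent standard Gaussian entries. Then almost surely (with probability 1 over the draw of Ω) the column space of AΩ equals the column space of A. -/
open MeasureTheory ProbabilityTheory Matrix

instance {m n : Type*} : MeasurableSpace (Matrix m n ℝ) :=
  inferInstanceAs (MeasurableSpace (m → n → ℝ))

/-- The distribution of a random `n × ℓ` real matrix with independent standard
Gaussian entries: the product over all entries of the measure `N(0,1)` on `ℝ`. -/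
noncomputable def gaussianMatrix (n ℓ : ℕ) : Measure (Matrix (Fin n) (Fin ℓ) ℝ) :=
  Measure.pi fun _ : Fin n => Measure.pi fun _ : Fin ℓ => gaussianReal 0 1

/-- The column space of a matrix: the range of `x ↦ M x`. -/
noncomputable def colSpace {m n : Type*} [Fintype n] (A : Matrix m n ℝ) :
    Submodule ℝ (m → ℝ) :=
  LinearMap.range A.mulVecLin

/-!
Let `r = rank A`. Choose `L`, `S` with `L A S = 1` (the `r × r` identity) and let `E` pick out the
first `r` of the `ℓ` columns. Then `Ω ↦ det (L A Ω E)` is a polynomial in the entries of `Ω`, not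
identically zero since it equals `1` at `Ω = S Eᵀ`, and wherever it does not vanish `A Ω` has
rank `r`, so `col (A Ω) = col A`. The zero set of a nonzero polynomial is null for any product of
atomless measures on `ℝ`, by induction on the number of variables and Fubini: for almost every
value of the last variables the leading coefficient in the first one is nonzero, leaving finitely
many roots.
-/

instance (n ℓ : ℕ) : IsProbabilityMeasure (gaussianMatrix n ℓ) :=
  inferInstanceAs <| IsProbabilityMeasure <|
    Measure.pi fun _ : Fin n => Measure.pi fun _ : Fin ℓ => gaussianReal 0 1

theorem MeasureTheory.measurePreserving_curry {ι κ X : Type*} [Fintype ι] [Fintype κ]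
    [MeasurableSpace X] (μ : ι → κ → Measure X) [∀ i j, SigmaFinite (μ i j)] :
    MeasurePreserving (MeasurableEquiv.curry ι κ X) (Measure.pi fun p : ι × κ => μ p.1 p.2)
      (Measure.pi fun i => Measure.pi (μ i)) := by
  refine MeasurePreserving.symm (MeasurableEquiv.curry ι κ X).symm
    ⟨(MeasurableEquiv.curry ι κ X).symm.measurable, (Measure.pi_eq fun s _ => ?_).symm⟩
  have hbox : (MeasurableEquiv.curry ι κ X).symm ⁻¹' Set.univ.pi s =
      Set.univ.pi fun i => Set.univ.pi fun j => s (i, j) := by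
    ext x
    simp [MeasurableEquiv.coe_curry_symm]
  rw [MeasurableEquiv.map_apply, hbox, Measure.pi_pi, Fintype.prod_prod_type]
  simp_rw [Measure.pi_pi]

namespace MvPolynomial

theorem ae_eval_ne_zero_fin {k : ℕ} (μ : Fin k → Measure ℝ) [∀ i, SigmaFinite (μ i)]
    [∀ i, NullSingletonClass (μ i)] {p : MvPolynomial (Fin k) ℝ} (hp : p ≠ 0) :
    ∀ᵐ x ∂Measure.pi μ, eval x p ≠ 0 := by
  induction k with
  | zero =>
    obtain ⟨x, hx⟩ : ∃ x, eval x p ≠ 0 := by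
      by_contra! h
      exact hp (funext fun x => by simpa using h x)
    exact ae_of_all _ fun y => by rwa [Subsingleton.elim y x]
  | succ k ih =>
    set Q := finSuccEquiv ℝ k p
    have hQ : Q ≠ 0 := (map_ne_zero_iff _ (finSuccEquiv ℝ k).injective).2 hp
    have hsections : ∀ᵐ s ∂Measure.pi (fun i => μ (Fin.succAbove 0 i)),
        ∀ᵐ y ∂μ 0, eval (Fin.cons y s) p ≠ 0 := by
      filter_upwards [ih _ (Polynomial.leadingCoeff_ne_zero.2 hQ)] with s hs
      have hQs : Q.map (eval s) ≠ 0 := fun h => hs (by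
        simpa using congr_arg (Polynomial.coeff · Q.natDegree) h)
      refine measure_mono_null (fun y hy => ?_)
        ((Polynomial.finite_setOfPred_isRoot hQs).measure_zero _)
      simpa [eval_eq_eval_mv_eval'] using hy
    set e := MeasurableEquiv.piFinSuccAbove (fun _ => ℝ) 0
    have hmeas : MeasurableSet {z | eval (e.symm z) p ≠ 0} :=
      (measurableSet_singleton 0).compl.preimage
        ((continuous_eval p).measurable.comp e.symm.measurable)
    rw [← (measurePreserving_piFinSuccAbove μ 0).symm.map_eq,
      e.symm.measurableEmbedding.ae_map_iff, Measure.ae_prod_iff_ae_ae hmeas,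
      Measure.ae_ae_comm hmeas]
    simpa [e, Fin.insertNthEquiv, Fin.insertNth_zero'] using hsections

theorem ae_eval_ne_zero {ι : Type*} [Fintype ι] (μ : ι → Measure ℝ) [∀ i, SigmaFinite (μ i)]
    [∀ i, NullSingletonClass (μ i)] {p : MvPolynomial ι ℝ} (hp : p ≠ 0) :
    ∀ᵐ x ∂Measure.pi μ, eval x p ≠ 0 := by
  let e := (Fintype.equivFin ι).symm
  have hp' : rename e.symm p ≠ 0 := by
    simpa using (rename_injective _ e.symm.injective).ne hp
  rw [← (measurePreserving_piCongrLeft μ e).map_eq,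
    (MeasurableEquiv.piCongrLeft _ e).measurableEmbedding.ae_map_iff]
  filter_upwards [ae_eval_ne_zero_fin _ hp'] with x hx
  rw [eval_rename] at hx
  convert hx using 3
  funext i
  simp [MeasurableEquiv.coe_piCongrLeft, Equiv.piCongrLeft_apply_eq_cast]

end MvPolynomial

namespace Matrix

theorem exists_mul_mul_eq_one {K m n : Type*} [Field K] [Fintype m] [Fintype n] (A : Matrix m n K) :
    ∃ (L : Matrix (Fin A.rank) m K) (S : Matrix n (Fin A.rank) K), L * A * S = 1 := by
  classical
  set V := LinearMap.range A.mulVecLin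
  let φ : V ≃ₗ[K] (Fin A.rank → K) := (Module.finBasisOfFinrankEq K V rfl).equivFun
  obtain ⟨π, hπ⟩ := V.subtype.exists_leftInverse_of_injective V.ker_subtype
  have hπA : π ∘ₗ A.mulVecLin = A.mulVecLin.rangeRestrict :=
    LinearMap.ext fun x => LinearMap.congr_fun hπ (A.mulVecLin.rangeRestrict x)
  obtain ⟨s, hs⟩ := (φ.toLinearMap ∘ₗ A.mulVecLin.rangeRestrict).exists_rightInverse_of_surjective
    (LinearMap.range_eq_top.2 <| by exact φ.surjective.comp A.mulVecLin.surjective_rangeRestrict)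
  refine ⟨LinearMap.toMatrix' (φ.toLinearMap ∘ₗ π), LinearMap.toMatrix' s,
    Matrix.toLin'.injective ?_⟩
  rw [Matrix.toLin'_mul, Matrix.toLin'_mul, Matrix.toLin'_toMatrix', Matrix.toLin'_toMatrix',
    Matrix.toLin'_one, Matrix.toLin'_apply', ← hs, ← hπA]
  rfl

theorem card_le_rank_of_det_mul_mul_ne_zero {K k m n : Type*} [Field K] [Fintype k]
    [DecidableEq k] [Fintype m] [Fintype n] (L : Matrix k m K) (M : Matrix m n K)
    (E : Matrix n k K) (h : (L * M * E).det ≠ 0) : Fintype.card k ≤ M.rank :=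
  calc Fintype.card k = (L * M * E).rank :=
        ((L * M * E).rank_of_isUnit ((isUnit_iff_isUnit_det _).2 h.isUnit)).symm
    _ ≤ (L * M).rank := rank_mul_le_left _ _
    _ ≤ M.rank := rank_mul_le_right _ _

theorem exists_mvPolynomial_eval_eq_det_mul_mul {R k m n : Type*} [CommRing R] [Fintype k]
    [DecidableEq k] [Fintype m] [Fintype n] (P : Matrix k m R) (Q : Matrix n k R) :
    ∃ p : MvPolynomial (m × n) R,
      ∀ Ω : Matrix m n R, MvPolynomial.eval (fun q => Ω q.1 q.2) p = (P * Ω * Q).det := by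
  let P' : Matrix k m (MvPolynomial (m × n) R) := P.map MvPolynomial.C
  let Q' : Matrix n k (MvPolynomial (m × n) R) := Q.map MvPolynomial.C
  refine ⟨(P' * mvPolynomialX m n R * Q').det, fun Ω => ?_⟩
  have hX : (mvPolynomialX m n R).map (MvPolynomial.eval fun q => Ω q.1 q.2) = Ω :=
    mvPolynomialX_map_eval₂ _ Ω
  rw [RingHom.map_det, RingHom.mapMatrix_apply, Matrix.map_mul, Matrix.map_mul, Matrix.map_map,
    Matrix.map_map, hX]
  simp [Function.comp_def]

end Matrix

theorem colSpace_mul_le {m n k : Type*} [Fintype n] [Fintype k] (A : Matrix m n ℝ)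
    (B : Matrix n k ℝ) : colSpace (A * B) ≤ colSpace A := by
  rw [colSpace, colSpace, Matrix.mulVecLin_mul]
  exact LinearMap.range_comp_le_range _ _

theorem colSpace_mul_eq_of_rank_le {m n k : Type*} [Fintype m] [Fintype n] [Fintype k]
    (A : Matrix m n ℝ) (B : Matrix n k ℝ) (h : A.rank ≤ (A * B).rank) :
    colSpace (A * B) = colSpace A :=
  Submodule.eq_of_le_of_finrank_le (colSpace_mul_le A B) h

theorem exists_mvPolynomial_ne_zero_colSpace_mul_eq {m n : Type*} [Fintype m] [Fintype n] (A : Matrix m n ℝ) {ℓ : ℕ} (hℓ : A.rank ≤ ℓ) :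
    ∃ p : MvPolynomial (n × Fin ℓ) ℝ, p ≠ 0 ∧ ∀ Ω : Matrix n (Fin ℓ) ℝ,
      MvPolynomial.eval (fun q => Ω q.1 q.2) p ≠ 0 → colSpace (A * Ω) = colSpace A := by
  obtain ⟨L, S, hLAS⟩ := A.exists_mul_mul_eq_one
  let E : Matrix (Fin ℓ) (Fin A.rank) ℝ :=
    (1 : Matrix (Fin ℓ) (Fin ℓ) ℝ).submatrix id (Fin.castLE hℓ)
  have hE : Eᵀ * E = 1 := by
    rw [transpose_submatrix, transpose_one, ← submatrix_mul _ _ _ _ _ Function.bijective_id,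
      Matrix.one_mul, submatrix_one _ (Fin.castLE_injective hℓ)]
  obtain ⟨p, hp⟩ := exists_mvPolynomial_eval_eq_det_mul_mul (L * A) E
  refine ⟨p, fun h0 => ?_, fun Ω hΩ => colSpace_mul_eq_of_rank_le A Ω ?_⟩
  · have h1 : L * A * (S * Eᵀ) * E = 1 := by
      rw [show L * A * (S * Eᵀ) * E = L * A * S * (Eᵀ * E) by simp only [Matrix.mul_assoc], hE,
        Matrix.mul_one, hLAS]
    simpa [h0, h1] using hp (S * Eᵀ)
  · rw [hp, Matrix.mul_assoc L] at hΩ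
    simpa using card_le_rank_of_det_mul_mul_ne_zero L (A * Ω) E hΩ

/-- If `A` is an `m × n` real matrix of rank `r` and `Ω` is a random `n × ℓ`
standard Gaussian matrix with `ℓ ≥ r`, then almost surely the column space of
`A * Ω` equals the column space of `A`. -/
theorem colSpace_mul_gaussian_eq_colSpace
    {m n r ℓ : ℕ} (A : Matrix (Fin m) (Fin n) ℝ)
    (hr : A.rank = r) (hℓ : r ≤ ℓ) :
    gaussianMatrix n ℓ {Ω | colSpace (A * Ω) = colSpace A} = 1 := by
  obtain ⟨p, hp0, hp⟩ := exists_mvPolynomial_ne_zero_colSpace_mul_eq A (hr ▸ hℓ)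
  have : NullSingletonClass (gaussianReal 0 1) := nullSingletonClass_gaussianReal one_ne_zero
  have hpairs : ∀ᵐ x ∂Measure.pi fun _ : Fin n × Fin ℓ => gaussianReal 0 1,
      colSpace (A * of (Function.curry x)) = colSpace A := by
    filter_upwards [MvPolynomial.ae_eval_ne_zero _ hp0] with x hx
    exact hp _ hx
  have hae : ∀ᵐ Ω ∂gaussianMatrix n ℓ, colSpace (A * Ω) = colSpace A := by
    have h := (MeasurableEquiv.curry _ _ ℝ).measurableEmbedding.ae_map_iff
      (p := fun Ω => colSpace (A * of Ω) = colSpace A) |>.2 hpairs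
    rw [(measurePreserving_curry fun (_ : Fin n) (_ : Fin ℓ) => gaussianReal 0 1).map_eq] at h
    exact h
  rw [measure_congr (ae_eq_univ.2 hae), measure_univ]
end

section
/- Let A be an m×n real matrix of rank k. Then there exists a set J of k column indices and a k×n real matrix X such that A = A(:,J)·X, the k×k submatrix X(:,J) is the identity matrix, and every entry of X has absolute value at most 1. (Interpolative decomposition: k columns of A form a basis for the column space of A, and every other column is a linear combination of them with coefficients bounded by 1 in magnitude.) -/
/-!
Pick columns `J₀` of `A` forming a basis of its column space and write every column in that
basis: `A = A(:,J₀) B` with `B(:,J₀) = 1`, so the `k × k` minors of `B` do not all vanish.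
Now let `J` maximise `|det B(:,J)|` and put `X = B(:,J)⁻¹ B`. Then `X(:,J) = 1`,
`A(:,J) X = A(:,J₀) B(:,J) B(:,J)⁻¹ B = A`, and by Cramer's rule `X i j` is the quotient of
`det B(:,J[i ↦ j])` by `det B(:,J)`, hence of absolute value at most `1` by maximality.
-/

open Matrix

namespace Matrix

variable {K : Type*} {m n ι : Type*}

theorem exists_eq_submatrix_mul_submatrix_eq_one [Field K] [Finite m] [Fintype n]
    (A : Matrix m n K) :
    ∃ J : Fin A.rank → n, ∃ B : Matrix (Fin A.rank) n K,
      A = A.submatrix id J * B ∧ B.submatrix id J = 1 := by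
  obtain ⟨κ, a, -, hspan, hli⟩ := exists_linearIndependent' K A.col
  have : Fintype κ := @Fintype.ofFinite _ hli.finite
  have hcard : Fintype.card κ = A.rank := by
    rw [rank_eq_finrank_span_cols, ← hspan, finrank_span_eq_card hli]
  let J : Fin A.rank → n := a ∘ (Fintype.equivFinOfCardEq hcard).symm
  have hliJ : LinearIndependent K (A.col ∘ J) := hli.comp _ (Equiv.injective _)
  have hmem (j : n) : A.col j ∈ Submodule.span K (Set.range (A.col ∘ J)) := by
    rw [show A.col ∘ J = (A.col ∘ a) ∘ _ from rfl, (Equiv.surjective _).range_comp, hspan]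
    exact Submodule.subset_span ⟨j, rfl⟩
  let b := Module.Basis.span hliJ
  refine ⟨J, of fun i j => b.repr ⟨A.col j, hmem j⟩ i, ?_, ?_⟩
  · ext r j
    have hsum := congrArg (fun x : Submodule.span K _ => (x : m → K) r)
      (b.sum_repr ⟨A.col j, hmem j⟩)
    simpa [b, Module.Basis.coe_span_apply, mul_apply, mul_comm, Finset.sum_apply] using hsum.symm
  · ext i i'
    have hbasis : (⟨A.col (J i'), hmem (J i')⟩ : Submodule.span K _) = b i' :=
      Subtype.ext (Module.Basis.coe_span_apply hliJ i').symm
    rw [submatrix_apply, id, of_apply, hbasis, b.repr_self, Finsupp.single_apply, one_apply]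
    exact if_congr eq_comm rfl rfl

theorem updateCol_submatrix_id [DecidableEq ι] (B : Matrix m n K) (J : ι → n) (i : ι)
    (j : n) : (B.submatrix id J).updateCol i (fun r => B r j) =
      B.submatrix id (Function.update J i j) := by
  ext r c
  by_cases hc : c = i
  · subst hc; simp
  · simp [updateCol_ne hc, Function.update_of_ne hc]

theorem inv_submatrix_mul_apply [Field K] [Fintype ι] [DecidableEq ι] (B : Matrix ι n K)
    (J : ι → n) (i : ι) (j : n) :
    ((B.submatrix id J)⁻¹ * B) i j =
      (B.submatrix id (Function.update J i j)).det / (B.submatrix id J).det := by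
  -- for a singular minor both sides are `0`: `M⁻¹ = 0` and `x / 0 = 0`
  have hcol : ((B.submatrix id J)⁻¹ * B) i j = ((B.submatrix id J)⁻¹ *ᵥ fun r => B r j) i :=
    rfl
  rw [hcol, inv_def, smul_mulVec, ← cramer_eq_adjugate_mulVec, Pi.smul_apply, cramer_apply,
    updateCol_submatrix_id, Ring.inverse_eq_inv', smul_eq_mul, div_eq_inv_mul]

theorem abs_inv_submatrix_mul_apply_le_one [Field K] [LinearOrder K] [IsStrictOrderedRing K]
    [Fintype ι] [DecidableEq ι] {B : Matrix ι n K} {J : ι → n}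
    (hJ : ∀ J', |(B.submatrix id J').det| ≤ |(B.submatrix id J).det|) (i : ι) (j : n) :
    |((B.submatrix id J)⁻¹ * B) i j| ≤ 1 := by
  rw [inv_submatrix_mul_apply, abs_div]
  exact div_le_one_of_le₀ (hJ _) (abs_nonneg _)

theorem inv_submatrix_mul_submatrix [Field K] [Fintype ι] [DecidableEq ι] {B : Matrix ι n K}
    {J : ι → n} (hJ : (B.submatrix id J).det ≠ 0) :
    ((B.submatrix id J)⁻¹ * B).submatrix id J = 1 :=
  nonsing_inv_mul _ hJ.isUnit

theorem injective_of_submatrix_id_eq_one [MulZeroOneClass K] [Nontrivial K] [DecidableEq ι]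
    {X : Matrix ι n K} {J : ι → n} (hX : X.submatrix id J = 1) : Function.Injective J := by
  intro a b hab
  by_contra hne
  have h₁ : X a (J a) = 1 := by simpa using congrFun (congrFun hX a) a
  have h₀ : X a (J b) = 0 := by simpa [one_apply_ne hne] using congrFun (congrFun hX a) b
  exact one_ne_zero (by rw [← h₁, hab, h₀] : (1 : K) = 0)

theorem exists_eq_submatrix_mul_abs_le_one_of_eq_mul [Field K] [LinearOrder K]
    [IsStrictOrderedRing K] [Fintype n] [Fintype ι] [DecidableEq ι] {A : Matrix m n K}
    {C : Matrix m ι K} {B : Matrix ι n K} (hA : A = C * B) {J₀ : ι → n}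
    (hJ₀ : (B.submatrix id J₀).det ≠ 0) :
    ∃ J : ι → n, ∃ X : Matrix ι n K,
      A = A.submatrix id J * X ∧ X.submatrix id J = 1 ∧ ∀ i j, |X i j| ≤ 1 := by
  have : Nonempty (ι → n) := ⟨J₀⟩
  obtain ⟨J, hJ⟩ := Finite.exists_max fun J => |(B.submatrix id J).det|
  have hdet : (B.submatrix id J).det ≠ 0 :=
    abs_pos.mp ((abs_pos.mpr hJ₀).trans_le (hJ J₀))
  refine ⟨J, (B.submatrix id J)⁻¹ * B, ?_, inv_submatrix_mul_submatrix hdet,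
    abs_inv_submatrix_mul_apply_le_one hJ⟩
  have hAJ : A.submatrix id J = C * B.submatrix id J := by rw [hA]; rfl
  rw [hAJ, Matrix.mul_assoc, mul_nonsing_inv_cancel_left _ _ hdet.isUnit, hA]

end Matrix

/-- Interpolative decomposition: an `m × n` real matrix of rank `k` can be
written as `A = A(:,J) · X` where `J` selects `k` columns of `A`, `X` contains
the `k × k` identity as the submatrix of columns `J`, and every entry of `X`
is bounded by `1` in absolute value. -/
theorem interpolative_decomposition
    {m n k : ℕ} (A : Matrix (Fin m) (Fin n) ℝ) (hrank : A.rank = k) :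
    ∃ (J : Fin k → Fin n), Function.Injective J ∧
      ∃ X : Matrix (Fin k) (Fin n) ℝ,
        A = A.submatrix id J * X ∧
        X.submatrix id J = 1 ∧
        ∀ i j, |X i j| ≤ 1 := by
  subst hrank
  obtain ⟨J₀, B, hAB, hBJ₀⟩ := A.exists_eq_submatrix_mul_submatrix_eq_one
  obtain ⟨J, X, hAX, hXJ, hXbound⟩ :=
    exists_eq_submatrix_mul_abs_le_one_of_eq_mul hAB
      (by simp [hBJ₀] : (B.submatrix id J₀).det ≠ 0)
  exact ⟨J, injective_of_submatrix_id_eq_one hXJ, X, hAX, hXJ, hXbound⟩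
end

section
/- Let A be an m×n real matrix with singular values σ_1 ≥ σ_2 ≥ … ≥ σ_r (r = min(m,n)), and for 0 ≤ k < r let A_k = Σ_{j=1}^{k} σ_j u_j v_jᵀ be the truncation of a singular value decomposition A = Σ_{j=1}^{r} σ_j u_j v_jᵀ to its first k terms. Then ‖A − A_k‖ = σ_{k+1} in the spectral norm, and moreover for every m×n real matrix B with rank at most k one has ‖A − B‖ ≥ σ_{k+1}; that is, σ_{k+1} = inf{‖A − B‖ : rank(B) ≤ k} and the truncated SVD attains this infimum. -/
/-!
For orthonormal `uⱼ`, `vⱼ` the operator `T = ∑ aⱼ uⱼ vⱼᵀ` satisfies `‖T x‖² = ∑ aⱼ² ⟪vⱼ, x⟫²`.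
With `aⱼ = 0` for `j ≤ k` and `|aⱼ| ≤ σₖ₊₁` otherwise, Bessel's inequality gives
`‖A - Aₖ‖ ≤ σₖ₊₁`. Conversely, a matrix `B` of rank at most `k` kills a nonzero `x` in the
`(k+1)`-dimensional span of `v₁, …, vₖ₊₁`, and there Parseval gives
`‖(A - B) x‖ = ‖A x‖ ≥ σₖ₊₁ ‖x‖`.
-/

open Matrix

noncomputable def matrixSpectralNorm {m n : ℕ} (A : Matrix (Fin m) (Fin n) ℝ) : ℝ :=
  ‖LinearMap.toContinuousLinearMap (Matrix.toEuclideanLin A)‖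

open InnerProductSpace Module WithLp

lemma Orthonormal.sum_inner_sq_eq_norm_sq_of_mem_span {ι E : Type*} [NormedAddCommGroup E]
    [InnerProductSpace ℝ E] {v : ι → E} (hv : Orthonormal ℝ v) {s : Finset ι} {w : E}
    (hw : w ∈ Submodule.span ℝ (v '' s)) :
    ∑ i ∈ s, inner ℝ (v i) w ^ 2 = ‖w‖ ^ 2 := by
  classical
  have := (OrthonormalBasis.span hv s).sum_sq_norm_inner_right ⟨w, by rwa [Finset.coe_image]⟩
  simp only [Submodule.coe_inner, OrthonormalBasis.span_apply, Real.norm_eq_abs, sq_abs,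
    Submodule.coe_norm] at this
  rwa [Finset.sum_coe_sort s (fun i => inner ℝ (v i) w ^ 2)] at this

lemma LinearMap.exists_mem_ne_zero_apply_eq_zero_of_finrank_range_lt {K V W : Type*} [Field K]
    [AddCommGroup V] [Module K V] [AddCommGroup W] [Module K W] [FiniteDimensional K V]
    (S : V →ₗ[K] W) {P : Submodule K V} (h : finrank K (LinearMap.range S) < finrank K P) :
    ∃ w ∈ P, w ≠ 0 ∧ S w = 0 := by
  obtain ⟨⟨w, hwP⟩, hker, hw0⟩ := (Submodule.ne_bot_iff _).mp
    (LinearMap.ker_ne_bot_of_finrank_lt (f := S.rangeRestrict ∘ₗ P.subtype) h)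
  refine ⟨w, hwP, by simpa using hw0, ?_⟩
  simpa [Subtype.ext_iff] using hker

section SVDSum

variable {ι E F : Type*} [Fintype ι] [NormedAddCommGroup E] [InnerProductSpace ℝ E]
  [NormedAddCommGroup F] [InnerProductSpace ℝ F]

/-- `∑ᵢ aᵢ uᵢ vᵢᵀ`, a singular value decomposition when `u` and `v` are orthonormal. -/
noncomputable def svdSum (a : ι → ℝ) (u : ι → F) (v : ι → E) : E →L[ℝ] F :=
  ∑ i, a i • rankOne ℝ (u i) (v i)

variable {u : ι → F} {v : ι → E}

lemma svdSum_apply (a : ι → ℝ) (u : ι → F) (v : ι → E) (x : E) :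
    svdSum a u v x = ∑ i, (a i * inner ℝ (v i) x) • u i := by
  simp [svdSum, mul_smul]

lemma svdSum_sub (a b : ι → ℝ) (u : ι → F) (v : ι → E) :
    svdSum a u v - svdSum b u v = svdSum (a - b) u v := by
  simp [svdSum, sub_smul]

lemma norm_svdSum_apply_sq (hu : Orthonormal ℝ u) (a : ι → ℝ) (x : E) :
    ‖svdSum a u v x‖ ^ 2 = ∑ i, (a i * inner ℝ (v i) x) ^ 2 := by
  rw [← real_inner_self_eq_norm_sq, svdSum_apply, hu.inner_sum]
  simp [sq]

lemma norm_svdSum_le (hu : Orthonormal ℝ u) (hv : Orthonormal ℝ v) {a : ι → ℝ} {c : ℝ}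
    (hc : 0 ≤ c) (ha : ∀ i, |a i| ≤ c) : ‖svdSum a u v‖ ≤ c := by
  refine ContinuousLinearMap.opNorm_le_bound _ hc fun x => ?_
  have hbessel : ∑ i, inner ℝ (v i) x ^ 2 ≤ ‖x‖ ^ 2 := by
    simpa only [Real.norm_eq_abs, sq_abs] using hv.sum_inner_products_le x (s := Finset.univ)
  have hsq : ‖svdSum a u v x‖ ^ 2 ≤ (c * ‖x‖) ^ 2 := calc
    ‖svdSum a u v x‖ ^ 2 = ∑ i, a i ^ 2 * inner ℝ (v i) x ^ 2 := by
      simp only [norm_svdSum_apply_sq hu, mul_pow]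
    _ ≤ ∑ i, c ^ 2 * inner ℝ (v i) x ^ 2 :=
      Finset.sum_le_sum fun i _ => mul_le_mul_of_nonneg_right
        (sq_le_sq.mpr ((ha i).trans (le_abs_self c))) (sq_nonneg _)
    _ = c ^ 2 * ∑ i, inner ℝ (v i) x ^ 2 := by rw [Finset.mul_sum]
    _ ≤ (c * ‖x‖) ^ 2 := by rw [mul_pow]; gcongr
  exact (pow_le_pow_iff_left₀ (norm_nonneg _) (by positivity) two_ne_zero).mp hsq

lemma mul_norm_le_norm_svdSum_apply (hu : Orthonormal ℝ u) (hv : Orthonormal ℝ v) {a : ι → ℝ}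
    {s : Finset ι} {c : ℝ} (hc : 0 ≤ c) (ha : ∀ i ∈ s, c ≤ |a i|) {w : E}
    (hw : w ∈ Submodule.span ℝ (v '' s)) :
    c * ‖w‖ ≤ ‖svdSum a u v w‖ := by
  have hsq : (c * ‖w‖) ^ 2 ≤ ‖svdSum a u v w‖ ^ 2 := calc
    (c * ‖w‖) ^ 2 = ∑ i ∈ s, c ^ 2 * inner ℝ (v i) w ^ 2 := by
      rw [mul_pow, ← Finset.mul_sum, hv.sum_inner_sq_eq_norm_sq_of_mem_span hw]
    _ ≤ ∑ i ∈ s, (a i * inner ℝ (v i) w) ^ 2 := by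
      refine Finset.sum_le_sum fun i hi => ?_
      rw [mul_pow]
      exact mul_le_mul_of_nonneg_right
        (sq_le_sq.mpr ((abs_of_nonneg hc).trans_le (ha i hi))) (sq_nonneg _)
    _ ≤ ∑ i, (a i * inner ℝ (v i) w) ^ 2 :=
      Finset.sum_le_univ_sum_of_nonneg fun i => sq_nonneg _
    _ = ‖svdSum a u v w‖ ^ 2 := (norm_svdSum_apply_sq hu a w).symm
  exact (pow_le_pow_iff_left₀ (by positivity) (norm_nonneg _) two_ne_zero).mp hsq

lemma le_norm_svdSum_sub [FiniteDimensional ℝ E] (hu : Orthonormal ℝ u) (hv : Orthonormal ℝ v)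
    {a : ι → ℝ} {s : Finset ι} {c : ℝ} (ha : ∀ i ∈ s, c ≤ |a i|) (S : E →L[ℝ] F)
    (hS : finrank ℝ (LinearMap.range (S : E →ₗ[ℝ] F)) < s.card) :
    c ≤ ‖svdSum a u v - S‖ := by
  classical
  rcases lt_or_ge c 0 with hc | hc
  · exact hc.le.trans (norm_nonneg _)
  have hdim : finrank ℝ (Submodule.span ℝ (v '' s)) = s.card := by
    rw [← Finset.coe_image, finrank_eq_card_basis (OrthonormalBasis.span hv s).toBasis,
      Fintype.card_coe]
  obtain ⟨w, hw, hw0, hSw⟩ :=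
    (S : E →ₗ[ℝ] F).exists_mem_ne_zero_apply_eq_zero_of_finrank_range_lt (hdim ▸ hS)
  have hTw : (svdSum a u v - S) w = svdSum a u v w := by
    rw [_root_.sub_apply, ← ContinuousLinearMap.coe_coe S, hSw, sub_zero]
  refine le_of_mul_le_mul_right ?_ (norm_pos_iff.mpr hw0)
  calc c * ‖w‖ ≤ ‖svdSum a u v w‖ := mul_norm_le_norm_svdSum_apply hu hv hc ha hw
    _ ≤ ‖svdSum a u v - S‖ * ‖w‖ := hTw ▸ (svdSum a u v - S).le_opNorm w

lemma abs_le_norm_svdSum [FiniteDimensional ℝ E] (hu : Orthonormal ℝ u) (hv : Orthonormal ℝ v)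
    (a : ι → ℝ) (i : ι) : |a i| ≤ ‖svdSum a u v‖ := by
  simpa using le_norm_svdSum_sub hu hv (s := {i}) (by simp) 0 (by simp)

end SVDSum

lemma Matrix.orthonormal_toLp_transpose {m r : Type*} [Fintype m] [DecidableEq r]
    {U : Matrix m r ℝ} (hU : Uᵀ * U = 1) :
    Orthonormal ℝ (fun j => toLp 2 (Uᵀ j)) := by
  rw [orthonormal_iff_ite]
  intro i j
  rw [EuclideanSpace.inner_toLp_toLp, ← Matrix.one_apply, ← hU]
  simp [Matrix.mul_apply, dotProduct, mul_comm]

lemma Matrix.toEuclideanLin_sum_smul_vecMulVec {m n r : Type*} [Fintype m] [Fintype n]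
    [DecidableEq n] [Fintype r] (a : r → ℝ) (U : Matrix m r ℝ) (V : Matrix n r ℝ) :
    LinearMap.toContinuousLinearMap
        (toEuclideanLin (∑ j, a j • vecMulVec (fun i => U i j) (fun i' => V i' j))) =
      svdSum a (fun j => toLp 2 (Uᵀ j)) (fun j => toLp 2 (Vᵀ j)) := by
  ext x i
  simp [svdSum_apply, Matrix.mulVec, dotProduct, Finset.sum_apply, Finset.mul_sum, Finset.sum_mul,
    EuclideanSpace.inner_eq_star_dotProduct]
  exact Finset.sum_congr rfl fun j _ => Finset.sum_congr rfl fun i' _ => by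
    rw [vecMulVec_apply]; ring

lemma Matrix.rank_eq_finrank_range_toEuclideanLin {m n : Type*} [Fintype m] [Fintype n]
    [DecidableEq n] (B : Matrix m n ℝ) :
    B.rank = finrank ℝ (LinearMap.range (toEuclideanLin B)) :=
  B.rank_eq_finrank_range_toLin (EuclideanSpace.basisFun m ℝ).toBasis
    (EuclideanSpace.basisFun n ℝ).toBasis

/-- Eckart–Young in the spectral norm: if `A = Σ_j σ_j u_j v_jᵀ` is a singular
value decomposition (with `U`, `V` having orthonormal columns and the `σ_j`
nonnegative and decreasing), and `A_k` is its truncation to the first `k`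
terms, then `‖A - A_k‖ = σ_{k+1}`, and every matrix `B` of rank at most `k`
satisfies `‖A - B‖ ≥ σ_{k+1}`. -/
theorem eckart_young_spectral
    {m n k : ℕ} (A : Matrix (Fin m) (Fin n) ℝ)
    (U : Matrix (Fin m) (Fin (min m n)) ℝ) (V : Matrix (Fin n) (Fin (min m n)) ℝ)
    (σ : Fin (min m n) → ℝ)
    (hU : Uᵀ * U = 1) (hV : Vᵀ * V = 1)
    (hσ0 : ∀ j, 0 ≤ σ j) (hσdec : Antitone σ)
    (hSVD : A = ∑ j : Fin (min m n),
      σ j • Matrix.vecMulVec (fun i => U i j) (fun i' => V i' j))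
    (hk : k < min m n) :
    matrixSpectralNorm (A - ∑ j : Fin (min m n),
        (if (j : ℕ) < k then σ j else 0) •
          Matrix.vecMulVec (fun i => U i j) (fun i' => V i' j)) = σ ⟨k, hk⟩ ∧
    ∀ B : Matrix (Fin m) (Fin n) ℝ, B.rank ≤ k →
      σ ⟨k, hk⟩ ≤ matrixSpectralNorm (A - B) := by
  have hu := Matrix.orthonormal_toLp_transpose hU
  have hv := Matrix.orthonormal_toLp_transpose hV
  simp only [matrixSpectralNorm, map_sub, hSVD, Matrix.toEuclideanLin_sum_smul_vecMulVec,
    svdSum_sub]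
  refine ⟨le_antisymm (norm_svdSum_le hu hv (hσ0 _) fun j => ?_) ?_, fun B hB => ?_⟩
  · by_cases hj : (j : ℕ) < k
    · simpa [hj] using hσ0 _
    · simpa [hj, abs_of_nonneg (hσ0 j)] using hσdec (Fin.le_def.mpr (not_lt.mp hj))
  · refine (le_of_eq ?_).trans (abs_le_norm_svdSum hu hv _ ⟨k, hk⟩)
    simp [abs_of_nonneg (hσ0 _)]
  · refine le_norm_svdSum_sub hu hv (s := Finset.Iic ⟨k, hk⟩) (fun i hi => ?_) _ ?_
    · rw [abs_of_nonneg (hσ0 i)]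
      exact hσdec (Finset.mem_Iic.mp hi)
    · rw [Fin.card_Iic, LinearMap.coe_toContinuousLinearMap,
        ← Matrix.rank_eq_finrank_range_toEuclideanLin]
      exact Nat.lt_succ_of_le hB
end

section
/- Let A be an m×n real matrix with singular values σ_1 ≥ σ_2 ≥ … ≥ σ_r (r = min(m,n)), and for 0 ≤ k < r let A_k = Σ_{j=1}^{k} σ_j u_j v_jᵀ be the truncation of a singular value decomposition of A to its first k terms. Then ‖A − A_k‖_F = (Σ_{j=k+1}^{r} σ_j²)^{1/2} in the Frobenius norm, and for every m×n real matrix B with rank at most k one has ‖A − B‖_F ≥ (Σ_{j=k+1}^{r} σ_j²)^{1/2}; the truncated SVD is a best rank-k approximation in the Frobenius norm. -/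
open Matrix

/-!
Write `A = U diag(σ) Vᵀ` and measure `‖X‖_F² = tr(XᵀX)`, which does not change when `X` is
multiplied on the left by a matrix with orthonormal columns, or on the right by the transpose of
one. A matrix `B` of rank at most `k` factors as `B = W (Wᵀ B)` with `W` having `r ≤ k` orthonormal
columns, and then least squares gives `‖A - B‖² ≥ ‖A‖² - ‖WᵀA‖²`. Finally
`‖WᵀA‖² = Σ_j σ_j² c_j` with `c_j = ‖Wᵀ u_j‖² ∈ [0, 1]` (Bessel) and `Σ_j c_j = ‖UᵀW‖² ≤ r ≤ k`,
so since `σ` is decreasing this weighted sum is at most `Σ_{j<k} σ_j²`.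
-/

noncomputable def frobNorm {m n : ℕ} (A : Matrix (Fin m) (Fin n) ℝ) : ℝ :=
  Real.sqrt (∑ i, ∑ j, (A i j) ^ 2)

theorem frobNorm_eq_sqrt_trace {m n : ℕ} (A : Matrix (Fin m) (Fin n) ℝ) :
    frobNorm A = √(Aᵀ * A).trace := by
  rw [frobNorm, trace, Finset.sum_comm]
  simp [mul_apply, sq]

section

variable {m n p r : Type*}

theorem sum_smul_vecMulVec_eq_mul_diagonal_mul_transpose [Fintype p] [DecidableEq p]
    (U : Matrix m p ℝ) (V : Matrix n p ℝ) (σ : p → ℝ) :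
    ∑ j, σ j • vecMulVec (fun i => U i j) (fun i' => V i' j) = U * diagonal σ * Vᵀ := by
  ext i i'
  rw [mul_apply]
  simp only [Matrix.sum_apply, Matrix.smul_apply, vecMulVec_apply, mul_diagonal, transpose_apply,
    smul_eq_mul]
  exact Finset.sum_congr rfl fun j _ => by ring

theorem transpose_mul_self_apply_self_nonneg [Fintype m] (A : Matrix m n ℝ) (j : n) :
    0 ≤ (Aᵀ * A) j j :=
  Finset.sum_nonneg fun i _ => mul_self_nonneg (A i j)

theorem trace_transpose_mul_self_nonneg [Fintype m] [Fintype n] (A : Matrix m n ℝ) :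
    0 ≤ (Aᵀ * A).trace :=
  Finset.sum_nonneg fun j _ => transpose_mul_self_apply_self_nonneg A j

theorem transpose_mul_self_mul_of_orthonormal [Fintype m] [Fintype p] [DecidableEq p]
    {U : Matrix m p ℝ} (hU : Uᵀ * U = 1) (M : Matrix p n ℝ) : (U * M)ᵀ * (U * M) = Mᵀ * M := by
  rw [transpose_mul, Matrix.mul_assoc, ← Matrix.mul_assoc Uᵀ, hU, Matrix.one_mul]

theorem trace_transpose_mul_self_mul_transpose_of_orthonormal [Fintype m] [Fintype n] [Fintype p]
    [DecidableEq p] {V : Matrix n p ℝ} (hV : Vᵀ * V = 1) (M : Matrix m p ℝ) :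
    ((M * Vᵀ)ᵀ * (M * Vᵀ)).trace = (Mᵀ * M).trace := by
  rw [transpose_mul, transpose_transpose, Matrix.mul_assoc, trace_mul_comm, Matrix.mul_assoc,
    Matrix.mul_assoc M, hV, Matrix.mul_one]

theorem trace_transpose_mul_self_mul_diagonal [Fintype m] [Fintype n] [DecidableEq n]
    (M : Matrix m n ℝ) (d : n → ℝ) :
    ((M * diagonal d)ᵀ * (M * diagonal d)).trace = ∑ j, d j ^ 2 * (Mᵀ * M) j j := by
  rw [transpose_mul, diagonal_transpose, Matrix.mul_assoc, ← Matrix.mul_assoc Mᵀ]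
  simp only [trace, diag, diagonal_mul, mul_diagonal]
  exact Finset.sum_congr rfl fun j _ => by ring

theorem trace_transpose_mul_self_mul_diagonal_mul_transpose [Fintype m] [Fintype n] [Fintype p]
    [DecidableEq p] {U : Matrix m p ℝ} {V : Matrix n p ℝ} (hU : Uᵀ * U = 1) (hV : Vᵀ * V = 1)
    (d : p → ℝ) :
    ((U * diagonal d * Vᵀ)ᵀ * (U * diagonal d * Vᵀ)).trace = ∑ j, d j ^ 2 := by
  rw [trace_transpose_mul_self_mul_transpose_of_orthonormal hV,
    transpose_mul_self_mul_of_orthonormal hU, ← Matrix.one_mul (diagonal d),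
    trace_transpose_mul_self_mul_diagonal]
  simp

theorem transpose_mul_self_sub_mul_of_orthonormal [Fintype m] [Fintype r] [DecidableEq r]
    {W : Matrix m r ℝ} (hW : Wᵀ * W = 1) (X : Matrix m n ℝ) (C : Matrix r n ℝ) :
    (X - W * C)ᵀ * (X - W * C) =
      Xᵀ * X - (Wᵀ * X)ᵀ * (Wᵀ * X) + (Wᵀ * X - C)ᵀ * (Wᵀ * X - C) := by
  simp only [transpose_sub, transpose_mul, transpose_transpose, Matrix.sub_mul, Matrix.mul_sub,
    Matrix.mul_assoc]
  rw [← Matrix.mul_assoc Wᵀ W C, hW, Matrix.one_mul]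
  abel

theorem transpose_mul_self_apply_self_le_of_orthonormal [Fintype m] [Fintype r] [DecidableEq r]
    {W : Matrix m r ℝ} (hW : Wᵀ * W = 1) (X : Matrix m n ℝ) (j : n) :
    ((Wᵀ * X)ᵀ * (Wᵀ * X)) j j ≤ (Xᵀ * X) j j := by
  have h := congrFun (congrFun (transpose_mul_self_sub_mul_of_orthonormal hW X (Wᵀ * X)) j) j
  simp only [sub_self, Matrix.mul_zero, add_zero, Matrix.sub_apply] at h
  linarith [transpose_mul_self_apply_self_nonneg (X - W * (Wᵀ * X)) j]

theorem trace_transpose_mul_self_sub_le_of_orthonormal [Fintype m] [Fintype n] [Fintype r]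
    [DecidableEq r] {W : Matrix m r ℝ} (hW : Wᵀ * W = 1) (X : Matrix m n ℝ) (C : Matrix r n ℝ) :
    (Xᵀ * X).trace - ((Wᵀ * X)ᵀ * (Wᵀ * X)).trace ≤ ((X - W * C)ᵀ * (X - W * C)).trace := by
  rw [transpose_mul_self_sub_mul_of_orthonormal hW, trace_add, trace_sub]
  linarith [trace_transpose_mul_self_nonneg (Wᵀ * X - C)]

theorem sum_mul_le_sum_of_sum_le_card {ι : Type*} [Fintype ι] (S : Finset ι) (d c : ι → ℝ)
    {t : ℝ} (ht : 0 ≤ t) (hdS : ∀ j ∈ S, t ≤ d j) (hdSc : ∀ j ∉ S, d j ≤ t)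
    (hc0 : ∀ j, 0 ≤ c j) (hc1 : ∀ j, c j ≤ 1) (hc : ∑ j, c j ≤ S.card) :
    ∑ j, d j * c j ≤ ∑ j ∈ S, d j := by
  classical
  -- summing `d j * (c j - [j ∈ S]) ≤ t * (c j - [j ∈ S])` gives `t * (∑ c - #S) ≤ 0` on the right
  have hpt : ∀ j, d j * c j - (if j ∈ S then d j else 0) ≤
      t * c j - (if j ∈ S then t else 0) := by
    intro j
    split_ifs with hj
    · nlinarith [hdS j hj, hc1 j]
    · nlinarith [hdSc j hj, hc0 j]
  have hsum := Finset.sum_le_sum fun j (_ : j ∈ Finset.univ) => hpt j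
  rw [Finset.sum_sub_distrib, Finset.sum_sub_distrib, Finset.sum_ite_mem, Finset.sum_ite_mem,
    Finset.univ_inter, ← Finset.mul_sum, Finset.sum_const, nsmul_eq_mul] at hsum
  linarith [mul_le_mul_of_nonneg_left hc ht]

theorem exists_orthonormal_mul_transpose_mul_eq [Fintype m] [Fintype n] (B : Matrix m n ℝ) :
    ∃ W : Matrix m (Fin B.rank) ℝ, Wᵀ * W = 1 ∧ W * (Wᵀ * B) = B := by
  classical
  let e : (m → ℝ) ≃ₗ[ℝ] EuclideanSpace ℝ m := (WithLp.linearEquiv 2 ℝ (m → ℝ)).symm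
  let K := (LinearMap.range B.mulVecLin).map e.toLinearMap
  have hK : Module.finrank ℝ K = B.rank := LinearEquiv.finrank_map_eq _ _
  let b := (stdOrthonormalBasis ℝ K).reindex (finCongr hK)
  have hcol : ∀ j, WithLp.toLp 2 (fun i => B i j) ∈ K := fun j =>
    Submodule.mem_map_of_mem ⟨Pi.single j 1, by ext i; simp [mulVec_single]⟩
  refine ⟨of fun i t => (b t : EuclideanSpace ℝ m) i, ?_, ?_⟩
  · ext t t'
    have h := orthonormal_iff_ite.mp b.orthonormal t t'
    simpa [mul_apply, one_apply, PiLp.inner_apply, mul_comm] using h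
  · ext i j
    have h := congrArg (fun x : K => (x : EuclideanSpace ℝ m) i) (b.sum_repr' ⟨_, hcol j⟩)
    simpa [mul_apply, PiLp.inner_apply, Finset.mul_sum, Finset.sum_mul, mul_comm, mul_left_comm]
      using h

theorem trace_projection_svd_le_sum_sq_lt [Fintype m] [Fintype n] {p k r : ℕ}
    {U : Matrix m (Fin p) ℝ} {V : Matrix n (Fin p) ℝ} {σ : Fin p → ℝ} (hU : Uᵀ * U = 1)
    (hV : Vᵀ * V = 1) (hσ0 : ∀ j, 0 ≤ σ j) (hσ : Antitone σ) {W : Matrix m (Fin r) ℝ} (hW : Wᵀ * W = 1)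
    (hr : r ≤ k) (hk : k < p) :
    ((Wᵀ * (U * diagonal σ * Vᵀ))ᵀ * (Wᵀ * (U * diagonal σ * Vᵀ))).trace ≤
      ∑ j ∈ Finset.univ.filter (fun j : Fin p => (j : ℕ) < k), σ j ^ 2 := by
  set c : Fin p → ℝ := fun j => ((Wᵀ * U)ᵀ * (Wᵀ * U)) j j
  have hc1 : ∀ j, c j ≤ 1 := fun j =>
    (transpose_mul_self_apply_self_le_of_orthonormal hW U j).trans_eq (by rw [hU, one_apply_eq])
  have hcs : ∑ j, c j ≤ k :=
    calc ∑ j, c j = ((Uᵀ * W)ᵀ * (Uᵀ * W)).trace := by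
          change ((Wᵀ * U)ᵀ * (Wᵀ * U)).trace = _
          rw [trace_mul_comm, transpose_mul, transpose_transpose, Matrix.mul_assoc,
            transpose_mul, Matrix.mul_assoc, transpose_transpose]
      _ ≤ (Wᵀ * W).trace :=
          Finset.sum_le_sum fun t _ => transpose_mul_self_apply_self_le_of_orthonormal hU W t
      _ ≤ k := by simpa [hW] using hr
  have hσsq : Antitone fun j => σ j ^ 2 := fun i j hij => pow_le_pow_left₀ (hσ0 j) (hσ hij) 2
  rw [show Wᵀ * (U * diagonal σ * Vᵀ) = Wᵀ * U * diagonal σ * Vᵀ by simp only [Matrix.mul_assoc],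
    trace_transpose_mul_self_mul_transpose_of_orthonormal hV,
    trace_transpose_mul_self_mul_diagonal]
  refine sum_mul_le_sum_of_sum_le_card _ _ c (t := σ ⟨k, hk⟩ ^ 2) (sq_nonneg _) ?_ ?_
    (fun j => transpose_mul_self_apply_self_nonneg _ j) hc1 ?_
  · intro j hj
    exact hσsq (Fin.le_def.mpr (Finset.mem_filter.mp hj).2.le)
  · intro j hj
    exact hσsq (Fin.le_def.mpr (by simpa using hj))
  · rwa [Fin.card_filter_val_lt, min_eq_right hk.le]

end

/-- Eckart–Young in the Frobenius norm: if `A = Σ_j σ_j u_j v_jᵀ` is a singular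
value decomposition (with `U`, `V` having orthonormal columns and the `σ_j`
nonnegative and decreasing), and `A_k` is its truncation to the first `k`
terms, then `‖A - A_k‖_F = (Σ_{j>k} σ_j²)^{1/2}`, and every matrix `B` of rank
at most `k` satisfies `‖A - B‖_F ≥ (Σ_{j>k} σ_j²)^{1/2}`. -/
theorem eckart_young_frobenius
    {m n k : ℕ} (A : Matrix (Fin m) (Fin n) ℝ)
    (U : Matrix (Fin m) (Fin (min m n)) ℝ) (V : Matrix (Fin n) (Fin (min m n)) ℝ)
    (σ : Fin (min m n) → ℝ)
    (hU : Uᵀ * U = 1) (hV : Vᵀ * V = 1)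
    (hσ0 : ∀ j, 0 ≤ σ j) (hσdec : Antitone σ)
    (hSVD : A = ∑ j : Fin (min m n),
      σ j • Matrix.vecMulVec (fun i => U i j) (fun i' => V i' j))
    (hk : k < min m n) :
    frobNorm (A - ∑ j : Fin (min m n),
        (if (j : ℕ) < k then σ j else 0) •
          Matrix.vecMulVec (fun i => U i j) (fun i' => V i' j)) =
      Real.sqrt (∑ j ∈ Finset.univ.filter (fun j : Fin (min m n) => k ≤ (j : ℕ)),
        σ j ^ 2) ∧
    ∀ B : Matrix (Fin m) (Fin n) ℝ, B.rank ≤ k →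
      Real.sqrt (∑ j ∈ Finset.univ.filter (fun j : Fin (min m n) => k ≤ (j : ℕ)),
        σ j ^ 2) ≤ frobNorm (A - B) := by
  rw [sum_smul_vecMulVec_eq_mul_diagonal_mul_transpose] at hSVD
  subst hSVD
  refine ⟨?_, fun B hB => ?_⟩
  · rw [sum_smul_vecMulVec_eq_mul_diagonal_mul_transpose, ← Matrix.sub_mul, ← Matrix.mul_sub,
      diagonal_sub, frobNorm_eq_sqrt_trace,
      trace_transpose_mul_self_mul_diagonal_mul_transpose hU hV, Finset.sum_filter]
    congr 1
    refine Finset.sum_congr rfl fun j _ => ?_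
    by_cases hj : (j : ℕ) < k
    · simp [hj, not_le.mpr hj]
    · simp [hj, not_lt.mp hj]
  · obtain ⟨W, hW, hWB⟩ := exists_orthonormal_mul_transpose_mul_eq B
    have hlsq := trace_transpose_mul_self_sub_le_of_orthonormal hW (U * diagonal σ * Vᵀ) (Wᵀ * B)
    have hcompress := trace_projection_svd_le_sum_sq_lt hU hV hσ0 hσdec hW hB hk
    have hsplit := Finset.sum_filter_add_sum_filter_not Finset.univ
      (fun j : Fin (min m n) => (j : ℕ) < k) fun j => σ j ^ 2
    simp only [not_lt] at hsplit
    rw [trace_transpose_mul_self_mul_diagonal_mul_transpose hU hV] at hlsq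
    rw [frobNorm_eq_sqrt_trace, ← hWB]
    exact Real.sqrt_le_sqrt (by linarith)
end

section
/- Let A be an N×N real matrix, let I_τ = I_α ⊔ I_β be a disjoint partition of an index set I_τ ⊆ {1,…,N}, and let I_τᶜ, I_αᶜ, I_βᶜ denote complements in {1,…,N}. Suppose Ū_α is an |I_α|×k_α matrix with orthonormal columns such that col(A(I_α, I_αᶜ)) ⊆ col(Ū_α), and Ū_β is an |I_β|×k_β matrix with orthonormal columns such that col(A(I_β, I_βᶜ)) ⊆ col(Ū_β). Let Ū_τ be any |I_τ|×k matrix whose columns lie in col(A(I_τ, I_τᶜ)), and write Ū_τ = [W_α; W_β] for its blocks of rows indexed by I_α and I_β. Then there exists a (k_α+k_β)×k matrix U_τ with Ū_τ = blockdiag(Ū_α, Ū_β)·U_τ; indeed U_τ = [Ū_αᵀ W_α ; Ū_βᵀ W_β] works. (Thus the HBS spanning condition on the children's basis matrices forces the nested-basis relation for the parent.) -/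
open Matrix

/-- If `U` has orthonormal columns and `v ∈ col(U)`, then `U Uᵀ v = v`. -/
lemma proj_fix {m : Type*} [Fintype m] {n : ℕ} (U : Matrix m (Fin n) ℝ)
    (hU : Uᵀ * U = 1) {v : m → ℝ} (hv : v ∈ colSpace U) :
    (U * Uᵀ).mulVec v = v := by
  obtain ⟨y, rfl⟩ := hv
  simp only [Matrix.mulVecLin_apply, Matrix.mulVec_mulVec, Matrix.mul_assoc, hU,
    Matrix.mul_one]

/-- Nestedness of HBS basis matrices.  The global index set `{1,…,N}` is
partitioned as `I_α ⊔ I_β ⊔ I_τᶜ` (`α`, `β` the children of `τ`), modelled by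
the sum type `(α ⊕ β) ⊕ c`.  If `Ū_α` (resp. `Ū_β`) has orthonormal columns
spanning the neutered row block `A(I_α, I_αᶜ)` (resp. `A(I_β, I_βᶜ)`), and the
columns of `Ū_τ` lie in the column space of `A(I_τ, I_τᶜ)`, then
`Ū_τ = blockdiag(Ū_α, Ū_β) · U_τ` for some small matrix `U_τ`; indeed
`U_τ = [Ū_αᵀ W_α ; Ū_βᵀ W_β]` works, where `W_α`, `W_β` are the row blocks of
`Ū_τ`. -/
theorem hbs_nested_basis
    {α β c : Type*} [Fintype α] [Fintype β] [Fintype c]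
    {kα kβ k : ℕ}
    (A : Matrix ((α ⊕ β) ⊕ c) ((α ⊕ β) ⊕ c) ℝ)
    (Uα : Matrix α (Fin kα) ℝ) (Uβ : Matrix β (Fin kβ) ℝ)
    (hUα1 : Uαᵀ * Uα = 1) (hUβ1 : Uβᵀ * Uβ = 1)
    -- columns of `Ū_α` span the columns of `A(I_α, I_αᶜ)`, where
    -- `I_αᶜ = I_β ⊔ I_τᶜ`:
    (hUα2 : colSpace (A.submatrix (fun a : α => Sum.inl (Sum.inl a))
        (Sum.elim (fun b : β => Sum.inl (Sum.inr b)) (fun x : c => Sum.inr x)))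
      ≤ colSpace Uα)
    -- columns of `Ū_β` span the columns of `A(I_β, I_βᶜ)`, where
    -- `I_βᶜ = I_α ⊔ I_τᶜ`:
    (hUβ2 : colSpace (A.submatrix (fun b : β => Sum.inl (Sum.inr b))
        (Sum.elim (fun a : α => Sum.inl (Sum.inl a)) (fun x : c => Sum.inr x)))
      ≤ colSpace Uβ)
    (Uτbar : Matrix (α ⊕ β) (Fin k) ℝ)
    -- columns of `Ū_τ` lie in the column space of `A(I_τ, I_τᶜ)`:
    (hUτ : ∀ j, (fun i => Uτbar i j) ∈
      colSpace (A.submatrix (Sum.inl : α ⊕ β → (α ⊕ β) ⊕ c)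
        (Sum.inr : c → (α ⊕ β) ⊕ c))) :
    (∃ Uτ : Matrix (Fin kα ⊕ Fin kβ) (Fin k) ℝ,
        Uτbar = Matrix.fromBlocks Uα 0 0 Uβ * Uτ) ∧
      Uτbar = Matrix.fromBlocks Uα 0 0 Uβ *
        Matrix.fromRows (Uαᵀ * Uτbar.submatrix Sum.inl id)
          (Uβᵀ * Uτbar.submatrix Sum.inr id) := by
  have hα : ∀ j, (fun a => Uτbar (Sum.inl a) j) ∈ colSpace Uα := by
    intro j
    obtain ⟨x, hx⟩ := hUτ j
    apply hUα2
    refine ⟨Sum.elim 0 x, ?_⟩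
    funext a
    have h := congrFun hx (Sum.inl a)
    simp only [Matrix.mulVecLin_apply, Matrix.mulVec, dotProduct,
      Matrix.submatrix_apply] at h ⊢
    simpa [Fintype.sum_sum_type] using h
  have hβ : ∀ j, (fun b => Uτbar (Sum.inr b) j) ∈ colSpace Uβ := by
    intro j
    obtain ⟨x, hx⟩ := hUτ j
    apply hUβ2
    refine ⟨Sum.elim 0 x, ?_⟩
    funext b
    have h := congrFun hx (Sum.inr b)
    simp only [Matrix.mulVecLin_apply, Matrix.mulVec, dotProduct,
      Matrix.submatrix_apply] at h ⊢
    simpa [Fintype.sum_sum_type] using h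
  have key : Uτbar = Matrix.fromBlocks Uα 0 0 Uβ *
      Matrix.fromRows (Uαᵀ * Uτbar.submatrix Sum.inl id)
        (Uβᵀ * Uτbar.submatrix Sum.inr id) := by
    ext i j
    cases i with
    | inl a =>
        have h := congrFun (proj_fix Uα hUα1 (hα j)) a
        simp only [Matrix.mulVec, dotProduct, Matrix.mul_apply] at h
        simp only [Matrix.mul_apply, Fintype.sum_sum_type,
          Matrix.fromBlocks_apply₁₁, Matrix.fromBlocks_apply₁₂,
          Matrix.fromRows_apply_inl, Matrix.fromRows_apply_inr,
          Matrix.zero_apply, Matrix.submatrix_apply, Matrix.transpose_apply,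
          id_eq, zero_mul, Finset.sum_const_zero, add_zero]
        rw [← h]
        simp only [Finset.sum_mul, Finset.mul_sum, Matrix.transpose_apply]
        rw [Finset.sum_comm]
        exact Finset.sum_congr rfl fun p _ => Finset.sum_congr rfl fun q _ => by ring
    | inr b =>
        have h := congrFun (proj_fix Uβ hUβ1 (hβ j)) b
        simp only [Matrix.mulVec, dotProduct, Matrix.mul_apply] at h
        simp only [Matrix.mul_apply, Fintype.sum_sum_type,
          Matrix.fromBlocks_apply₂₁, Matrix.fromBlocks_apply₂₂,
          Matrix.fromRows_apply_inl, Matrix.fromRows_apply_inr,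
          Matrix.zero_apply, Matrix.submatrix_apply, Matrix.transpose_apply,
          id_eq, zero_mul, Finset.sum_const_zero, zero_add]
        rw [← h]
        simp only [Finset.sum_mul, Finset.mul_sum, Matrix.transpose_apply]
        rw [Finset.sum_comm]
        exact Finset.sum_congr rfl fun p _ => Finset.sum_congr rfl fun q _ => by ring
  exact ⟨⟨_, key⟩, key⟩
end
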